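/- arXiv:1311.1020 — 3 statements merged into one kernel-verified Lean document; each statement's English description precedes it below -/
import Mathlib

section
/- Let A be a d×d dilation matrix with integer entries, i.e. all eigenvalues of A are greater than 1 in absolute value, and let S(A) := {s ∈ [0,1)^d : As ∈ ℤ^d}. For k ∈ ℤ^d and s ∈ S(A)\{0} define Ω_{k,s} := {A^j(k + s) : j ∈ ℕ, j ≥ 1}. Then ℤ^d \ {0} = ⋃_{k ∈ ℤ^d, s ∈ S(A)\{0}} Ω_{k,s}, and Ω_{k,s} ∩ Ω_{k',s'} = ∅ whenever k ≠ k' or s ≠ s'. -/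
/-!
All eigenvalues of `A⁻¹` lie in the open unit disc, so `A⁻ⁿ v → 0` for every `v` (Gelfand's
formula). Hence for an integer vector `v ≠ 0` there is a least `n` with `w = A⁻ⁿ v ∉ ℤ^d`; then
`n ≥ 1` and `A w ∈ ℤ^d`, and splitting `w` into integer part `k` and fractional part `s` gives
`v = Aⁿ (k + s)` with `s ∈ S(A) \ {0}`.

Conversely `k + s ∉ ℤ^d` when `s ≠ 0`, so `A^j (k + s) = A^j' (k' + s')` with `j < j'` would put
`k + s = A^(j' - j) (k' + s')` in `ℤ^d`. Thus `j = j'`, and `k + s = k' + s'` forces `s = s'`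
because two points of `[0,1)^d` differing by an integer vector coincide.
-/

open Matrix Filter Topology
open scoped NNReal ENNReal

theorem tendsto_pow_atTop_nhds_zero_of_spectralRadius_lt_one {𝒜 : Type*} [NormedRing 𝒜]
    [NormedAlgebra ℂ 𝒜] [CompleteSpace 𝒜] {a : 𝒜} (ha : spectralRadius ℂ a < 1) :
    Tendsto (fun n : ℕ => a ^ n) atTop (𝓝 0) := by
  obtain ⟨c, hac, hc1⟩ := ENNReal.lt_iff_exists_nnreal_btwn.mp ha
  have hroot : ∀ᶠ n : ℕ in atTop, (‖a ^ n‖₊ : ℝ≥0∞) ^ (n : ℝ)⁻¹ < c := by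
    simpa only [one_div] using
      (spectrum.pow_nnnorm_pow_one_div_tendsto_nhds_spectralRadius a).eventually_lt_const hac
  refine squeeze_zero_norm' ?_ (tendsto_pow_atTop_nhds_zero_of_lt_one c.coe_nonneg
    (by exact_mod_cast hc1))
  filter_upwards [hroot, eventually_gt_atTop 0] with n hn hn0
  rw [ENNReal.rpow_inv_lt_iff (by positivity), ENNReal.rpow_natCast] at hn
  exact_mod_cast hn.le

section Spectrum

variable {ι : Type*} [Fintype ι] [DecidableEq ι]

theorem RingHom.map_nonsing_inv {K L : Type*} [Field K] [Field L] (f : K →+* L)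
    (A : Matrix ι ι K) : A⁻¹.map f = (A.map f)⁻¹ := by
  rw [inv_def, inv_def, Ring.inverse_eq_inv', Ring.inverse_eq_inv', ← RingHom.mapMatrix_apply,
    ← RingHom.mapMatrix_apply, ← RingHom.map_det, ← RingHom.map_adjugate, ← map_inv₀]
  ext i j
  simp

theorem Matrix.isUnit_of_forall_isRoot_charpoly_one_lt_norm {K : Type*} [NormedField K]
    {B : Matrix ι ι K} (hB : ∀ z : K, B.charpoly.IsRoot z → 1 < ‖z‖) : IsUnit B := by
  by_contra h
  have := hB 0 (mem_spectrum_iff_isRoot_charpoly.mp ((spectrum.zero_mem_iff K).mpr h))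
  norm_num at this

theorem Matrix.norm_lt_one_of_mem_spectrum_inv {B : Matrix ι ι ℂ}
    (hB : ∀ z : ℂ, B.charpoly.IsRoot z → 1 < ‖z‖) {z : ℂ} (hz : z ∈ spectrum ℂ B⁻¹) :
    ‖z‖ < 1 := by
  rw [← (isUnit_of_forall_isRoot_charpoly_one_lt_norm hB).unit_spec, ← coe_units_inv,
    ← spectrum.map_inv, Set.mem_inv, mem_spectrum_iff_isRoot_charpoly] at hz
  have := hB _ hz
  rw [norm_inv, one_lt_inv_iff₀] at this
  exact this.2

theorem Matrix.map_pow_mulVec_ofReal (M : Matrix ι ι ℝ) (k : ℕ) (v : ι → ℝ) :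
    M.map Complex.ofReal ^ k *ᵥ (Complex.ofReal ∘ v) = Complex.ofReal ∘ (M ^ k *ᵥ v) := by
  ext i
  have := RingHom.map_mulVec Complex.ofRealHom (M ^ k) v i
  rw [← RingHom.mapMatrix_apply, map_pow, RingHom.mapMatrix_apply] at this
  exact this.symm

attribute [local instance] Matrix.linftyOpNormedRing Matrix.linftyOpNormedAlgebra in
theorem Matrix.tendsto_pow_mulVec_nhds_zero {M : Matrix ι ι ℝ}
    (hM : ∀ z ∈ spectrum ℂ (M.map Complex.ofReal), ‖z‖ < 1) (v : ι → ℝ) :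
    Tendsto (fun k : ℕ => M ^ k *ᵥ v) atTop (𝓝 0) := by
  rcases isEmpty_or_nonempty ι with hι | hι
  · exact tendsto_const_nhds.congr fun _ => Subsingleton.elim _ _
  have hpow : Tendsto (fun k : ℕ => M.map Complex.ofReal ^ k) atTop (𝓝 0) :=
    tendsto_pow_atTop_nhds_zero_of_spectralRadius_lt_one <|
      by simpa using spectrum.spectralRadius_lt_of_forall_lt (r := 1) _ fun z hz =>
        (by exact_mod_cast hM z hz : ‖z‖₊ < 1)
  have hcx : Tendsto (fun k : ℕ => Complex.ofReal ∘ (M ^ k *ᵥ v)) atTop (𝓝 0) := by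
    refine (((continuous_id.matrix_mulVec continuous_const).tendsto' 0 0
      (zero_mulVec (Complex.ofReal ∘ v))).comp hpow).congr fun k => ?_
    exact map_pow_mulVec_ofReal M k v
  have hre :=
    ((continuous_pi fun i => Complex.continuous_re.comp (continuous_apply i)).tendsto 0).comp hcx
  simp only [Function.comp_def, Complex.ofReal_re, Pi.zero_apply, Complex.zero_re] at hre
  exact hre

theorem Matrix.isUnit_det_of_forall_isRoot_one_lt_norm {A : Matrix ι ι ℝ}
    (hA : ∀ z : ℂ, (A.map Complex.ofReal).charpoly.IsRoot z → 1 < ‖z‖) : IsUnit A.det := by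
  have h := (isUnit_iff_isUnit_det _).mp (isUnit_of_forall_isRoot_charpoly_one_lt_norm hA)
  change IsUnit (Complex.ofRealHom.mapMatrix A).det at h
  rw [← RingHom.map_det] at h
  simpa using h

theorem Matrix.tendsto_inv_pow_mulVec_nhds_zero {A : Matrix ι ι ℝ}
    (hA : ∀ z : ℂ, (A.map Complex.ofReal).charpoly.IsRoot z → 1 < ‖z‖) (v : ι → ℝ) :
    Tendsto (fun n : ℕ => A⁻¹ ^ n *ᵥ v) atTop (𝓝 0) :=
  tendsto_pow_mulVec_nhds_zero (fun _ hz => norm_lt_one_of_mem_spectrum_inv hA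
    (RingHom.map_nonsing_inv Complex.ofRealHom A ▸ hz)) v

end Spectrum

variable {ι : Type*}

variable (ι) in
def intLattice : AddSubgroup (ι → ℝ) where
  carrier := {v | ∃ k : ι → ℤ, v = fun i => (k i : ℝ)}
  add_mem' := by
    rintro _ _ ⟨k, rfl⟩ ⟨m, rfl⟩
    exact ⟨k + m, by ext; simp⟩
  zero_mem' := ⟨0, by ext; simp⟩
  neg_mem' := by
    rintro _ ⟨k, rfl⟩
    exact ⟨-k, by ext; simp⟩

theorem intCast_mem_intLattice (k : ι → ℤ) : (fun i => (k i : ℝ)) ∈ intLattice ι := ⟨k, rfl⟩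

theorem eq_of_sub_mem_intLattice {s s' : ι → ℝ} (hs : ∀ i, s i ∈ Set.Ico (0 : ℝ) 1)
    (hs' : ∀ i, s' i ∈ Set.Ico (0 : ℝ) 1) (h : s - s' ∈ intLattice ι) : s = s' := by
  obtain ⟨k, hk⟩ := h
  ext i
  rw [← Int.fract_eq_self.2 (hs i), ← Int.fract_eq_self.2 (hs' i)]
  exact Int.fract_eq_fract.2 ⟨k i, congrFun hk i⟩

theorem add_notMem_intLattice {m s : ι → ℝ} (hm : m ∈ intLattice ι)
    (hs : ∀ i, s i ∈ Set.Ico (0 : ℝ) 1) (hs0 : s ≠ 0) : m + s ∉ intLattice ι := fun h =>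
  hs0 <| eq_of_sub_mem_intLattice hs (fun _ => ⟨le_rfl, one_pos⟩)
    (by simpa using sub_mem h hm)

section Fintype
variable [Fintype ι]

theorem eq_zero_of_mem_intLattice_of_norm_lt_one {v : ι → ℝ} (hv : v ∈ intLattice ι)
    (hv1 : ‖v‖ < 1) : v = 0 := by
  obtain ⟨k, rfl⟩ := hv
  ext i
  have : |(k i : ℝ)| < 1 := (norm_le_pi_norm _ i).trans_lt hv1
  simp [Int.abs_lt_one_iff.mp (by exact_mod_cast this)]

theorem mulVec_mem_intLattice {A : Matrix ι ι ℝ} (hA : ∀ i j, ∃ z : ℤ, A i j = z)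
    {v : ι → ℝ} (hv : v ∈ intLattice ι) : A *ᵥ v ∈ intLattice ι := by
  choose Z hZ using hA
  obtain ⟨k, rfl⟩ := hv
  exact ⟨Z *ᵥ k, by ext i; simp [mulVec, dotProduct, hZ]⟩

def fractionalPoints (A : Matrix ι ι ℝ) : Set (ι → ℝ) :=
  {s | (∀ i, s i ∈ Set.Ico (0 : ℝ) 1) ∧ A *ᵥ s ∈ intLattice ι}

variable [DecidableEq ι] {A : Matrix ι ι ℝ}

theorem pow_mulVec_mem_intLattice (hA : ∀ i j, ∃ z : ℤ, A i j = z)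
    {v : ι → ℝ} (hv : v ∈ intLattice ι) (n : ℕ) : A ^ n *ᵥ v ∈ intLattice ι := by
  induction n with
  | zero => simpa using hv
  | succ n ih => simpa [pow_succ', ← mulVec_mulVec] using mulVec_mem_intLattice hA ih

theorem pow_succ_mulVec_add_mem_intLattice (hA : ∀ i j, ∃ z : ℤ, A i j = z)
    {m s : ι → ℝ} (hm : m ∈ intLattice ι) (hs : A *ᵥ s ∈ intLattice ι) (n : ℕ) :
    A ^ (n + 1) *ᵥ (m + s) ∈ intLattice ι := by
  rw [pow_succ, ← mulVec_mulVec, mulVec_add]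
  exact pow_mulVec_mem_intLattice hA (add_mem (mulVec_mem_intLattice hA hm) hs) n

theorem pow_mulVec_injective (hdet : IsUnit A.det) (n : ℕ) :
    Function.Injective (A ^ n).mulVec :=
  mulVec_injective_iff_isUnit.2 <| (isUnit_iff_isUnit_det _).2 (by rw [det_pow]; exact hdet.pow n)

theorem pow_mulVec_inv_pow_mulVec (hdet : IsUnit A.det) (n : ℕ) (v : ι → ℝ) :
    A ^ n *ᵥ (A⁻¹ ^ n *ᵥ v) = v := by
  rw [mulVec_mulVec, inv_pow', mul_nonsing_inv _ (by rw [det_pow]; exact hdet.pow n), one_mulVec]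

theorem not_lt_of_pow_mulVec_add_eq (hA : ∀ i j, ∃ z : ℤ, A i j = z) (hdet : IsUnit A.det)
    {k k' : ι → ℤ} {s s' : ι → ℝ} (hs : ∀ i, s i ∈ Set.Ico (0 : ℝ) 1) (hs0 : s ≠ 0)
    (hs' : A *ᵥ s' ∈ intLattice ι) {j j' : ℕ}
    (h : A ^ j *ᵥ ((fun i => (k i : ℝ)) + s) = A ^ j' *ᵥ ((fun i => (k' i : ℝ)) + s')) :
    ¬ j < j' := by
  intro hlt
  obtain ⟨n, rfl⟩ := Nat.exists_eq_add_of_lt hlt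
  rw [add_assoc, pow_add, ← mulVec_mulVec] at h
  refine add_notMem_intLattice (intCast_mem_intLattice k) hs hs0 ?_
  rw [pow_mulVec_injective hdet j h]
  exact pow_succ_mulVec_add_mem_intLattice hA (intCast_mem_intLattice k') hs' n

theorem eq_of_pow_mulVec_add_eq (hA : ∀ i j, ∃ z : ℤ, A i j = z) (hdet : IsUnit A.det)
    {k k' : ι → ℤ} {s s' : ι → ℝ} (hs : s ∈ fractionalPoints A) (hs0 : s ≠ 0)
    (hs' : s' ∈ fractionalPoints A) (hs0' : s' ≠ 0) {j j' : ℕ}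
    (h : A ^ j *ᵥ ((fun i => (k i : ℝ)) + s) = A ^ j' *ᵥ ((fun i => (k' i : ℝ)) + s')) :
    k = k' ∧ s = s' := by
  obtain rfl : j = j' := le_antisymm
    (not_lt.1 (not_lt_of_pow_mulVec_add_eq hA hdet hs'.1 hs0' hs.2 h.symm))
    (not_lt.1 (not_lt_of_pow_mulVec_add_eq hA hdet hs.1 hs0 hs'.2 h))
  have hks := pow_mulVec_injective hdet j h
  have hss : s = s' := eq_of_sub_mem_intLattice hs.1 hs'.1 <| by
    rw [show s - s' = (fun i => (k' i : ℝ)) - (fun i => (k i : ℝ)) by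
      rw [sub_eq_sub_iff_add_eq_add, add_comm, ← hks, add_comm]]
    exact sub_mem (intCast_mem_intLattice k') (intCast_mem_intLattice k)
  subst hss
  exact ⟨funext fun i => by exact_mod_cast congrFun (add_right_cancel hks) i, rfl⟩

theorem exists_inv_pow_mulVec_notMem_intLattice (hdet : IsUnit A.det) {v : ι → ℝ}
    (hv0 : v ≠ 0) (hdecay : Tendsto (fun n : ℕ => A⁻¹ ^ n *ᵥ v) atTop (𝓝 0)) :
    ∃ n, A⁻¹ ^ n *ᵥ v ∉ intLattice ι := by
  obtain ⟨n, hn⟩ := (hdecay.eventually (Metric.ball_mem_nhds 0 one_pos)).exists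
  refine ⟨n, fun hmem => hv0 ?_⟩
  rw [← pow_mulVec_inv_pow_mulVec hdet n v,
    eq_zero_of_mem_intLattice_of_norm_lt_one hmem (by simpa using hn), mulVec_zero]

theorem exists_eq_pow_mulVec_add (hA : ∀ i j, ∃ z : ℤ, A i j = z) (hdet : IsUnit A.det)
    {v : ι → ℝ} (hv : v ∈ intLattice ι) (hv0 : v ≠ 0)
    (hdecay : Tendsto (fun n : ℕ => A⁻¹ ^ n *ᵥ v) atTop (𝓝 0)) :
    ∃ (k : ι → ℤ) (s : ι → ℝ), s ∈ fractionalPoints A ∧ s ≠ 0 ∧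
      ∃ j, 1 ≤ j ∧ v = A ^ j *ᵥ ((fun i => (k i : ℝ)) + s) := by
  classical
  have H := exists_inv_pow_mulVec_notMem_intLattice hdet hv0 hdecay
  obtain ⟨p, hp⟩ : ∃ p, Nat.find H = p + 1 :=
    Nat.exists_eq_succ_of_ne_zero fun h0 =>
      Nat.find_spec H (by rw [h0, pow_zero, one_mulVec]; exact hv)
  set w := A⁻¹ ^ (p + 1) *ᵥ v with hw
  have hwL : w ∉ intLattice ι := by
    have := Nat.find_spec H
    rwa [hp] at this
  have hAw : A *ᵥ w ∈ intLattice ι := by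
    have : A *ᵥ w = A⁻¹ ^ p *ᵥ v := by
      simpa [hw, pow_succ', ← mulVec_mulVec] using
        pow_mulVec_inv_pow_mulVec hdet 1 (A⁻¹ ^ p *ᵥ v)
    exact this ▸ not_not.1 (Nat.find_min H (by omega : p < Nat.find H))
  have hsplit : (fun i => ((⌊w i⌋ : ℤ) : ℝ)) + (fun i => Int.fract (w i)) = w := by
    ext i; exact Int.floor_add_fract (w i)
  refine ⟨fun i => ⌊w i⌋, fun i => Int.fract (w i),
    ⟨fun i => ⟨Int.fract_nonneg _, Int.fract_lt_one _⟩, ?_⟩, ?_, p + 1, by omega, ?_⟩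
  · rw [← add_sub_cancel_left (fun i => ((⌊w i⌋ : ℤ) : ℝ)) (fun i => Int.fract (w i)), hsplit,
      mulVec_sub]
    exact sub_mem hAw (mulVec_mem_intLattice hA (intCast_mem_intLattice _))
  · intro h0
    rw [h0, add_zero] at hsplit
    exact hwL (hsplit ▸ intCast_mem_intLattice _)
  · rw [hsplit, hw, pow_mulVec_inv_pow_mulVec hdet]

end Fintype

/-- For an integer dilation matrix `A` and `S(A) = {s ∈ [0,1)^d : A s ∈ ℤ^d}`,
the sets `Ω_{k,s} = {A^j (k + s) : j ≥ 1}`, for `k ∈ ℤ^d` and `s ∈ S(A) \ {0}`, form a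
partition of `ℤ^d \ {0}` (viewed inside `ℝ^d`). -/
theorem elliptic_stmt6 (d : ℕ) (A : Matrix (Fin d) (Fin d) ℝ)
    (hAint : ∀ i j, ∃ z : ℤ, A i j = (z : ℝ))
    (hAeig : ∀ z : ℂ, (Matrix.charpoly (A.map Complex.ofReal)).IsRoot z →
      1 < ‖z‖)
    (SA : Set (Fin d → ℝ))
    (hSA : SA = {s | (∀ i, s i ∈ Set.Ico (0:ℝ) 1) ∧
      ∃ k : Fin d → ℤ, A *ᵥ s = fun i => (k i : ℝ)})
    (Ω : (Fin d → ℤ) → (Fin d → ℝ) → Set (Fin d → ℝ))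
    (hΩ : ∀ k s, Ω k s =
      {v | ∃ j : ℕ, 1 ≤ j ∧ v = (A ^ j) *ᵥ ((fun i => (k i : ℝ)) + s)}) :
    {v : Fin d → ℝ | ∃ k : Fin d → ℤ, v = fun i => (k i : ℝ)} \ {0}
        = (⋃ k : Fin d → ℤ, ⋃ s ∈ SA \ {0}, Ω k s) ∧
    ∀ k k' : Fin d → ℤ, ∀ s ∈ SA \ {0}, ∀ s' ∈ SA \ {0},
      (k ≠ k' ∨ s ≠ s') → Ω k s ∩ Ω k' s' = ∅ := by
  subst hSA
  have hdet : IsUnit A.det := isUnit_det_of_forall_isRoot_one_lt_norm hAeig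
  refine ⟨?_, ?_⟩
  · ext v
    simp only [Set.mem_sdiff, Set.mem_singleton_iff, Set.mem_iUnion, hΩ, Set.mem_ofPred_eq]
    constructor
    · rintro ⟨hv, hv0⟩
      obtain ⟨k, s, hs, hs0, j, hj, rfl⟩ := exists_eq_pow_mulVec_add hAint hdet hv hv0
        (tendsto_inv_pow_mulVec_nhds_zero hAeig v)
      exact ⟨k, s, ⟨hs, hs0⟩, j, hj, rfl⟩
    · rintro ⟨k, s, ⟨hs, hs0⟩, j, hj, rfl⟩
      obtain ⟨n, rfl⟩ := Nat.exists_eq_add_of_le' hj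
      refine ⟨pow_succ_mulVec_add_mem_intLattice hAint (intCast_mem_intLattice k) hs.2 n,
        fun h0 => add_notMem_intLattice (intCast_mem_intLattice k) hs.1 hs0 ?_⟩
      rw [pow_mulVec_injective hdet _ (h0.trans (mulVec_zero _).symm)]
      exact zero_mem _
  · rintro k k' s ⟨hs, hs0⟩ s' ⟨hs', hs0'⟩ hne
    refine Set.eq_empty_iff_forall_notMem.2 fun v ⟨hv, hv'⟩ => ?_
    rw [hΩ] at hv hv'
    obtain ⟨j, -, rfl⟩ := hv
    obtain ⟨j', -, h⟩ := hv'
    obtain ⟨rfl, rfl⟩ := eq_of_pow_mulVec_add_eq hAint hdet hs hs0 hs' hs0' h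
    simp at hne
end

section
/- In the elliptic setup, for every ξ ∈ ℝ^d with ξ ≠ 0, the infinite product ∏_{j=1}^∞ m₀((A⁻ᵀ)^j ξ) converges and equals G(ξ)M(ξ)/P(ξ). -/
/-!
Put `B = A⁻ᵀ`, `η_j = Bʲ ξ` and `κ = q^{2/d}`. The factorisation of `A⁻ᵀ` gives
`κ P(Bx) = P(x)`, so `κʲ P(η_j) = P(ξ)` and `η_j → 0`. Since
`G(x) = P(sin x) + ∑ q_ii (1 - cos x_i)²`, `G` is positive off `2πℤᵈ`, vanishes on it, and
`|G - P| = O(‖x‖⁴) = O(P²)`; hence `κʲ G(η_j) → P(ξ)`.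

If `ξ ∉ 2πℤᵈ`, no iterate lies in `2πℤᵈ` because `Aᵀ` maps `2πℤᵈ` into itself, so the definition
of `μ` telescopes to `(∏_{j<J} μ(η_j)) G(ξ) = κᴶ (∏_{j=1}^J m₀(η_j)) G(η_J)`, and we let `J → ∞`.

If `ξ ∈ 2πℤᵈ`, then `G(ξ) = 0`. As `η_j → 0`, there is a `j` with `η_j ∈ 2πℤᵈ` and
`η_{j+1} ∉ 2πℤᵈ`. For `w = η_{j+1} / 2π` we have `Aᵀ w ∈ ℤᵈ` and `w ∉ ℤᵈ`, so the fractional part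
`s` of `-w` is a nonzero element of `S(Aᵀ)` with `η_{j+1} + 2πs ∈ 2πℤᵈ`. Thus `m₀(η_{j+1}) = 0`
and the partial products vanish from then on.
-/

open Matrix Filter Topology Real

theorem abs_sin_sub_self_le (x : ℝ) : |sin x - x| ≤ |x| ^ 3 / 6 := by
  rcases le_total 0 x with hx | hx
  · rw [abs_of_nonneg hx, abs_of_nonpos (by linarith [sin_le hx])]
    linarith [sin_ge_sub_cube hx]
  · have h1 := sin_le (neg_nonneg.2 hx)
    have h2 := sin_ge_sub_cube (neg_nonneg.2 hx)
    rw [sin_neg] at h1 h2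
    rw [abs_of_nonpos hx, abs_of_nonneg (by linarith)]
    linarith

theorem four_mul_sin_half_sq (t : ℝ) : 4 * sin (t / 2) ^ 2 = sin t ^ 2 + (1 - cos t) ^ 2 := by
  have hsin : sin t = 2 * sin (t / 2) * cos (t / 2) := by rw [← sin_two_mul]; ring_nf
  have hcos : cos t = cos (t / 2) ^ 2 - sin (t / 2) ^ 2 := by rw [← cos_two_mul']; ring_nf
  rw [hsin, hcos]
  linear_combination (1 - sin (t / 2) ^ 2 - cos (t / 2) ^ 2) * sin_sq_add_cos_sq (t / 2)

theorem abs_sin_mul_sin_sub_mul_le {a b r : ℝ} (ha : |a| ≤ r) (hb : |b| ≤ r) :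
    |sin a * sin b - a * b| ≤ r ^ 4 := by
  have hr : 0 ≤ r := (abs_nonneg a).trans ha
  calc |sin a * sin b - a * b| = |sin a * (sin b - b) + b * (sin a - a)| := by ring_nf
    _ ≤ |sin a| * |sin b - b| + |b| * |sin a - a| := by
      rw [← abs_mul, ← abs_mul]; exact abs_add_le _ _
    _ ≤ r * (r ^ 3 / 6) + r * (r ^ 3 / 6) := by
      gcongr
      · exact abs_sin_le_abs.trans ha
      · exact (abs_sin_sub_self_le b).trans (by gcongr)
      · exact (abs_sin_sub_self_le a).trans (by gcongr)
    _ ≤ r ^ 4 := by nlinarith [pow_nonneg hr 4]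

theorem abs_one_sub_cos_sq_le {a r : ℝ} (ha : |a| ≤ r) : |(1 - cos a) ^ 2| ≤ r ^ 4 := by
  have hr : 0 ≤ r := (abs_nonneg a).trans ha
  have h1 : 1 - cos a ≤ r ^ 2 / 2 := by
    have := sq_le_sq' (abs_le.mp ha).1 (abs_le.mp ha).2
    linarith [one_sub_sq_div_two_le_cos (x := a)]
  rw [abs_of_nonneg (sq_nonneg _)]
  calc (1 - cos a) ^ 2 ≤ (r ^ 2 / 2) ^ 2 := by gcongr; linarith [cos_le_one a]
    _ ≤ r ^ 4 := by nlinarith [pow_nonneg hr 4]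

theorem abs_sum_mul_le {α : Type*} (s : Finset α) (a b : α → ℝ) {c : ℝ}
    (h : ∀ i ∈ s, |b i| ≤ c) : |∑ i ∈ s, a i * b i| ≤ (∑ i ∈ s, |a i|) * c := by
  rw [Finset.sum_mul]
  refine (Finset.abs_sum_le_sum_abs _ _).trans (Finset.sum_le_sum fun i hi => ?_)
  rw [abs_mul]
  exact mul_le_mul_of_nonneg_left (h i hi) (abs_nonneg _)

theorem Finset.sum_sum_eq_sum_add_two_nsmul_sum_lt {ι M : Type*} [Fintype ι] [LinearOrder ι]
    [AddCommMonoid M] (f : ι → ι → M) (hf : ∀ i j, f i j = f j i) :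
    ∑ i, ∑ j, f i j = ∑ i, f i i + 2 • ∑ i, ∑ j, if i < j then f i j else 0 := by
  have hsplit : ∀ i j, f i j = (if i = j then f i j else 0) + (if i < j then f i j else 0)
      + (if j < i then f j i else 0) := by
    intro i j
    rcases lt_trichotomy i j with h | rfl | h
    · simp [h, h.ne, h.not_gt]
    · simp
    · simp [h, h.ne', h.not_gt, hf i j]
  conv_lhs => enter [2, i, 2, j]; rw [hsplit i j]
  simp only [Finset.sum_add_distrib, Finset.sum_ite_eq, Finset.mem_univ, if_true, two_nsmul]
  rw [Finset.sum_comm (f := fun i j => if j < i then f j i else 0), add_assoc]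

theorem dotProduct_mulVec_eq_sum_sum {ι : Type*} [Fintype ι] (R : Matrix ι ι ℝ) (x : ι → ℝ) :
    x ⬝ᵥ (R *ᵥ x) = ∑ i, ∑ j, R i j * (x i * x j) := by
  simp only [dotProduct, mulVec, Finset.mul_sum]
  exact Fintype.sum_congr _ _ fun i => Fintype.sum_congr _ _ fun j => by ring

theorem one_lt_abs_det_of_one_lt_norm_root {n : Type*} [Fintype n] [DecidableEq n] [Nonempty n]
    (A : Matrix n n ℝ)
    (hA : ∀ z : ℂ, (A.map Complex.ofReal).charpoly.IsRoot z → 1 < ‖z‖) : 1 < |A.det| := by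
  set p := (A.map Complex.ofReal).charpoly
  have hp : p ≠ 0 := (charpoly_monic _).ne_zero
  have hcard : p.roots.card = Fintype.card n := by
    rw [← charpoly_natDegree_eq_dim (A.map Complex.ofReal)]
    exact Polynomial.splits_iff_card_roots.mp (IsAlgClosed.splits _)
  have hdet : (A.map Complex.ofReal).det = (A.det : ℂ) := by
    rw [← Complex.ofRealHom_eq_coe, RingHom.map_det]
    rfl
  obtain ⟨z, hz⟩ := Multiset.card_pos_iff_exists_mem.mp (hcard ▸ Fintype.card_pos)
  obtain ⟨t, ht⟩ := Multiset.exists_cons_of_mem hz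
  have hroot : ∀ w ∈ p.roots, 1 < ‖w‖ := fun w hw => hA w ((Polynomial.mem_roots hp).mp hw)
  calc 1 < ‖z‖ := hroot z hz
    _ ≤ ‖z‖ * (t.map (normHom : ℂ →*₀ ℝ)).prod := by
      refine le_mul_of_one_le_right (norm_nonneg z) (Multiset.one_le_prod_map fun w hw => ?_)
      exact (hroot w (ht ▸ Multiset.mem_cons_of_mem hw)).le
    _ = ‖p.roots.prod‖ := by rw [ht, Multiset.prod_cons, norm_mul, ← map_multiset_prod]; rfl
    _ = |A.det| := by
      rw [← det_eq_prod_roots_charpoly, hdet, Complex.norm_real, Real.norm_eq_abs]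

def twoPiLattice (ι : Type*) : Set (ι → ℝ) := {x | ∃ k : ι → ℤ, x = fun i => 2 * π * (k i : ℝ)}

/-- The paper's `S(M)`: representatives in `[0,1)ᵈ` of `M⁻¹ℤᵈ / ℤᵈ`. -/
def cosetReps {ι : Type*} [Fintype ι] (M : Matrix ι ι ℝ) : Set (ι → ℝ) :=
  {s | (∀ i, s i ∈ Set.Ico (0 : ℝ) 1) ∧ ∃ k : ι → ℤ, M *ᵥ s = fun i => (k i : ℝ)}

/-- The paper's `m₀`, for `S = S(Aᵀ)`. -/
noncomputable def mask {ι : Type*} (G : (ι → ℝ) → ℝ) (S : Set (ι → ℝ)) (ξ : ι → ℝ) : ℝ :=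
  (∏ᶠ s ∈ S \ {0}, G (ξ + (2 * π) • s)) / ∏ᶠ s ∈ S \ {0}, G ((2 * π) • s)

section Lattice

theorem sub_mem_twoPiLattice {ι : Type*} {x y : ι → ℝ} (hx : x ∈ twoPiLattice ι)
    (hy : y ∈ twoPiLattice ι) : x - y ∈ twoPiLattice ι := by
  obtain ⟨k, rfl⟩ := hx
  obtain ⟨l, rfl⟩ := hy
  exact ⟨k - l, funext fun i => by simp only [Pi.sub_apply, Int.cast_sub]; ring⟩

theorem two_pi_smul_mem_twoPiLattice_iff {ι : Type*} {v : ι → ℝ} :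
    (2 * π) • v ∈ twoPiLattice ι ↔ ∃ k : ι → ℤ, v = fun i => (k i : ℝ) := by
  refine exists_congr fun k => ⟨fun h => funext fun i => ?_, fun h => funext fun i => by simp [h]⟩
  have := congrFun h i
  simp only [Pi.smul_apply, smul_eq_mul] at this
  exact mul_left_cancel₀ two_pi_pos.ne' this

variable {ι : Type*} [Fintype ι]

theorem eq_zero_of_mem_twoPiLattice_of_norm_lt {x : ι → ℝ} (hx : x ∈ twoPiLattice ι)
    (h : ‖x‖ < 2 * π) : x = 0 := by
  obtain ⟨k, rfl⟩ := hx
  funext i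
  have hi : 2 * π * |(k i : ℝ)| < 2 * π * 1 := by
    simpa [abs_mul, abs_of_pos pi_pos] using (norm_le_pi_norm _ i).trans_lt h
  have hk : |k i| < 1 := by exact_mod_cast lt_of_mul_lt_mul_left hi two_pi_pos.le
  simp [Int.abs_lt_one_iff.mp hk]

theorem exists_mem_twoPiLattice_and_succ_not_mem {η : ℕ → ι → ℝ} (h0 : η 0 ∈ twoPiLattice ι)
    (hη : Tendsto η atTop (𝓝 0)) (hne : ∀ j, η j ≠ 0) :
    ∃ j, η j ∈ twoPiLattice ι ∧ η (j + 1) ∉ twoPiLattice ι := by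
  obtain ⟨n, hn⟩ := (hη.eventually (Metric.ball_mem_nhds 0 two_pi_pos)).exists
  have hnL : η n ∉ twoPiLattice ι := fun h =>
    hne n (eq_zero_of_mem_twoPiLattice_of_norm_lt h (by simpa using hn))
  obtain ⟨j, hj, hj1⟩ := Nat.exists_not_and_succ_of_not_zero_of_exists
    (p := fun j => η j ∉ twoPiLattice ι) (not_not.mpr h0) ⟨n, hnL⟩
  exact ⟨j, not_not.mp hj, hj1⟩

theorem mulVec_mem_twoPiLattice {M : Matrix ι ι ℝ} (hM : ∀ i j, ∃ z : ℤ, M i j = z) {x : ι → ℝ}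
    (hx : x ∈ twoPiLattice ι) : M *ᵥ x ∈ twoPiLattice ι := by
  choose Z hZ using hM
  obtain ⟨k, rfl⟩ := hx
  refine ⟨Z *ᵥ k, funext fun i => ?_⟩
  simp only [mulVec, dotProduct, hZ, Int.cast_sum, Int.cast_mul, Finset.mul_sum]
  exact Finset.sum_congr rfl fun j _ => by ring

open scoped Matrix.Norms.Operator in
theorem cosetReps_finite [DecidableEq ι] {M : Matrix ι ι ℝ} (hM : IsUnit M.det) :
    (cosetReps M).Finite := by
  set N := ⌈‖M‖⌉
  refine ((Set.Finite.pi fun _ => Set.finite_Icc (-N) N).image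
    fun k : ι → ℤ => M⁻¹ *ᵥ fun i => (k i : ℝ)).subset ?_
  rintro s ⟨hs, k, hk⟩
  refine ⟨k, fun i _ => ?_, by simp [← hk, mulVec_mulVec, nonsing_inv_mul _ hM]⟩
  have hs1 : ‖s‖ ≤ 1 := (pi_norm_le_iff_of_nonneg zero_le_one).mpr fun i => by
    rw [Real.norm_eq_abs, abs_of_nonneg (hs i).1]
    exact (hs i).2.le
  have hki : |(k i : ℝ)| ≤ ‖M‖ :=
    calc |(k i : ℝ)| = ‖(M *ᵥ s) i‖ := by rw [hk, Real.norm_eq_abs]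
      _ ≤ ‖M *ᵥ s‖ := norm_le_pi_norm _ i
      _ ≤ ‖M‖ * ‖s‖ := linfty_opNorm_mulVec _ _
      _ ≤ ‖M‖ := mul_le_of_le_one_right (norm_nonneg _) hs1
  have : |k i| ≤ N := by exact_mod_cast hki.trans (Int.le_ceil _)
  exact abs_le.mp this

theorem exists_mem_cosetReps_add_mem_twoPiLattice {M : Matrix ι ι ℝ}
    (hM : ∀ i j, ∃ z : ℤ, M i j = z) {x : ι → ℝ} (hMx : M *ᵥ x ∈ twoPiLattice ι)
    (hx : x ∉ twoPiLattice ι) : ∃ s ∈ cosetReps M \ {0}, x + (2 * π) • s ∈ twoPiLattice ι := by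
  set s : ι → ℝ := fun i => Int.fract (-(x i / (2 * π)))
  have hxs : x + (2 * π) • s ∈ twoPiLattice ι := by
    refine ⟨fun i => -⌊-(x i / (2 * π))⌋, funext fun i => ?_⟩
    simp only [s, Pi.add_apply, Pi.smul_apply, smul_eq_mul, ← Int.self_sub_floor]
    field_simp
    push_cast
    ring
  have hMs : (2 * π) • (M *ᵥ s) ∈ twoPiLattice ι := by
    have := sub_mem_twoPiLattice (mulVec_mem_twoPiLattice hM hxs) hMx
    rwa [mulVec_add, add_sub_cancel_left, mulVec_smul] at this
  refine ⟨s, ⟨⟨fun i => ⟨Int.fract_nonneg _, Int.fract_lt_one _⟩,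
    two_pi_smul_mem_twoPiLattice_iff.mp hMs⟩, fun h0 => hx ?_⟩, hxs⟩
  rw [Set.mem_singleton_iff.mp h0, smul_zero, add_zero] at hxs
  exact hxs

theorem mask_cosetReps_eq_zero [DecidableEq ι] {M : Matrix ι ι ℝ}
    (hMint : ∀ i j, ∃ z : ℤ, M i j = z) (hM : IsUnit M.det) {G : (ι → ℝ) → ℝ}
    (hG : ∀ y ∈ twoPiLattice ι, G y = 0) {x : ι → ℝ} (hMx : M *ᵥ x ∈ twoPiLattice ι)
    (hx : x ∉ twoPiLattice ι) : mask G (cosetReps M) x = 0 := by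
  obtain ⟨s, hs, hxs⟩ := exists_mem_cosetReps_add_mem_twoPiLattice hMint hMx hx
  have hfin := (cosetReps_finite hM).sdiff (t := {0})
  rw [mask, finprod_mem_eq_finite_toFinset_prod _ hfin,
    Finset.prod_eq_zero (f := fun s => G (x + (2 * π) • s)) (hfin.mem_toFinset.mpr hs) (hG _ hxs),
    zero_div]

end Lattice

section TrigSymbol

variable {ι : Type*} [Fintype ι] [LinearOrder ι]

/-- The paper's `G`, for `R = Q²`. -/
noncomputable def trigSymbol (R : Matrix ι ι ℝ) (x : ι → ℝ) : ℝ :=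
  4 * (∑ i, R i i * sin (x i / 2) ^ 2)
    + 2 * (∑ i, ∑ j, if i < j then R i j * sin (x i) * sin (x j) else 0)

variable {R : Matrix ι ι ℝ}

theorem trigSymbol_eq (hR : Rᵀ = R) (x : ι → ℝ) :
    trigSymbol R x = (sin ∘ x) ⬝ᵥ (R *ᵥ (sin ∘ x)) + ∑ i, R i i * (1 - cos (x i)) ^ 2 := by
  have hsymm : ∀ i j, R i j = R j i := fun i j => by simpa using congrFun (congrFun hR j) i
  rw [dotProduct_mulVec_eq_sum_sum, Finset.sum_sum_eq_sum_add_two_nsmul_sum_lt _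
    fun i j => by rw [hsymm i j]; ring]
  have hdiag : 4 * ∑ i, R i i * sin (x i / 2) ^ 2
      = ∑ i, R i i * (sin (x i) * sin (x i)) + ∑ i, R i i * (1 - cos (x i)) ^ 2 := by
    rw [Finset.mul_sum, ← Finset.sum_add_distrib]
    refine Fintype.sum_congr _ _ fun i => ?_
    rw [mul_left_comm, four_mul_sin_half_sq]
    ring
  simp only [trigSymbol, Function.comp_apply, nsmul_eq_mul, Nat.cast_ofNat, hdiag, mul_assoc]
  ring

theorem trigSymbol_eq_zero_of_mem {x : ι → ℝ} (hx : x ∈ twoPiLattice ι) : trigSymbol R x = 0 := by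
  obtain ⟨k, rfl⟩ := hx
  have h1 : ∀ i, sin (2 * π * k i / 2) = 0 := fun i => by
    rw [show 2 * π * k i / 2 = k i * π by ring, sin_int_mul_pi]
  have h2 : ∀ i, sin (2 * π * k i) = 0 := fun i => by
    rw [show 2 * π * k i = (2 * k i : ℤ) * π by push_cast; ring, sin_int_mul_pi]
  simp [trigSymbol, h1, h2]

theorem trigSymbol_pos (hR : Rᵀ = R) (hRpos : ∀ x ≠ 0, 0 < x ⬝ᵥ (R *ᵥ x)) {x : ι → ℝ}
    (hx : x ∉ twoPiLattice ι) : 0 < trigSymbol R x := by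
  have hdiag : ∀ i, 0 < R i i := fun i => by
    simpa using hRpos (Pi.single i 1) (by simp)
  obtain ⟨i, hi⟩ : ∃ i, cos (x i) ≠ 1 := by
    by_contra! h
    choose k hk using fun i => (cos_eq_one_iff (x i)).mp (h i)
    exact hx ⟨k, funext fun i => by rw [← hk i]; ring⟩
  have hquad : 0 ≤ (sin ∘ x) ⬝ᵥ (R *ᵥ (sin ∘ x)) := by
    rcases eq_or_ne (sin ∘ x) 0 with h | h
    · simp [h]
    · exact (hRpos _ h).le
  have hi' : 0 < 1 - cos (x i) := sub_pos.mpr ((cos_le_one _).lt_of_ne hi)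
  have hcos : 0 < ∑ i, R i i * (1 - cos (x i)) ^ 2 :=
    Finset.sum_pos' (fun j _ => mul_nonneg (hdiag j).le (sq_nonneg _))
      ⟨i, Finset.mem_univ i, mul_pos (hdiag i) (pow_pos hi' 2)⟩
  rw [trigSymbol_eq hR]
  linarith

theorem abs_trigSymbol_sub_le (hR : Rᵀ = R) (x : ι → ℝ) :
    |trigSymbol R x - x ⬝ᵥ (R *ᵥ x)| ≤ (∑ p : ι × ι, |R p.1 p.2| + ∑ i, |R i i|) * ‖x‖ ^ 4 := by
  have hx : ∀ i, |x i| ≤ ‖x‖ := fun i => norm_le_pi_norm x i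
  have hsplit : trigSymbol R x - x ⬝ᵥ (R *ᵥ x)
      = ∑ p : ι × ι, R p.1 p.2 * (sin (x p.1) * sin (x p.2) - x p.1 * x p.2)
        + ∑ i, R i i * (1 - cos (x i)) ^ 2 := by
    simp only [trigSymbol_eq hR, dotProduct_mulVec_eq_sum_sum, Fintype.sum_prod_type, mul_sub,
      Finset.sum_sub_distrib, Function.comp_apply]
    ring
  rw [hsplit, add_mul]
  exact (abs_add_le _ _).trans (add_le_add
    (abs_sum_mul_le _ _ _ fun p _ => abs_sin_mul_sin_sub_mul_le (hx p.1) (hx p.2))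
    (abs_sum_mul_le _ _ _ fun i _ => abs_one_sub_cos_sq_le (hx i)))

theorem exists_abs_trigSymbol_sub_le (hR : Rᵀ = R) {K : ℝ}
    (hK : ∀ x : ι → ℝ, ‖x‖ ^ 2 ≤ K * (x ⬝ᵥ (R *ᵥ x))) :
    ∃ C, ∀ x : ι → ℝ, |trigSymbol R x - x ⬝ᵥ (R *ᵥ x)| ≤ C * (x ⬝ᵥ (R *ᵥ x)) ^ 2 := by
  set C₀ := ∑ p : ι × ι, |R p.1 p.2| + ∑ i, |R i i|
  refine ⟨C₀ * K ^ 2, fun x => ?_⟩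
  have hC₀ : 0 ≤ C₀ := by positivity
  calc |trigSymbol R x - x ⬝ᵥ (R *ᵥ x)| ≤ C₀ * (‖x‖ ^ 2) ^ 2 := by
        rw [← pow_mul]; exact abs_trigSymbol_sub_le hR x
    _ ≤ C₀ * (K * (x ⬝ᵥ (R *ᵥ x))) ^ 2 := by gcongr; exact hK x
    _ = C₀ * K ^ 2 * (x ⬝ᵥ (R *ᵥ x)) ^ 2 := by ring

end TrigSymbol

section QuadraticForm

variable {ι : Type*} [Fintype ι]

theorem norm_sq_le_dotProduct_self (y : ι → ℝ) : ‖y‖ ^ 2 ≤ y ⬝ᵥ y := by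
  have hy : 0 ≤ y ⬝ᵥ y := Finset.sum_nonneg fun i _ => mul_self_nonneg (y i)
  refine (Real.le_sqrt (norm_nonneg y) hy).mp ((pi_norm_le_iff_of_nonneg (Real.sqrt_nonneg _)).mpr
    fun i => Real.abs_le_sqrt ?_)
  rw [sq]
  exact Finset.single_le_sum (f := fun j => y j * y j) (fun j _ => mul_self_nonneg (y j))
    (Finset.mem_univ i)

theorem dotProduct_mulVec_mul_self {Q : Matrix ι ι ℝ} (hQ : Qᵀ = Q) (x : ι → ℝ) :
    x ⬝ᵥ ((Q * Q) *ᵥ x) = (Q *ᵥ x) ⬝ᵥ (Q *ᵥ x) := by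
  rw [← mulVec_mulVec, dotProduct_mulVec, ← mulVec_transpose, hQ]

theorem dotProduct_mulVec_mul_self_pos {Q : Matrix ι ι ℝ} (hQsymm : Qᵀ = Q)
    (hQ : ∀ x ≠ 0, 0 < x ⬝ᵥ (Q *ᵥ x)) {x : ι → ℝ} (hx : x ≠ 0) :
    0 < x ⬝ᵥ ((Q * Q) *ᵥ x) := by
  have hQx : Q *ᵥ x ≠ 0 := fun h => by simpa [h] using hQ x hx
  rw [dotProduct_mulVec_mul_self hQsymm]
  exact (Finset.sum_nonneg fun i _ => mul_self_nonneg _).lt_of_ne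
    (Ne.symm (dotProduct_self_eq_zero.not.mpr hQx))

variable [DecidableEq ι]

theorem isUnit_det_of_dotProduct_mulVec_pos {Q : Matrix ι ι ℝ}
    (hQ : ∀ x ≠ 0, 0 < x ⬝ᵥ (Q *ᵥ x)) : IsUnit Q.det := by
  rw [isUnit_iff_ne_zero]
  intro h
  obtain ⟨v, hv, hQv⟩ := exists_mulVec_eq_zero_iff.mpr h
  simpa [hQv] using hQ v hv

open scoped Matrix.Norms.Operator in
theorem exists_norm_sq_le_mul_dotProduct {Q : Matrix ι ι ℝ} (hQ : Qᵀ = Q) (hQdet : IsUnit Q.det) :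
    ∃ K, ∀ x : ι → ℝ, ‖x‖ ^ 2 ≤ K * (x ⬝ᵥ ((Q * Q) *ᵥ x)) := by
  refine ⟨‖Q⁻¹‖ ^ 2, fun x => ?_⟩
  have hx : ‖x‖ ≤ ‖Q⁻¹‖ * ‖Q *ᵥ x‖ := by
    simpa [mulVec_mulVec, nonsing_inv_mul _ hQdet] using linfty_opNorm_mulVec Q⁻¹ (Q *ᵥ x)
  calc ‖x‖ ^ 2 ≤ (‖Q⁻¹‖ * ‖Q *ᵥ x‖) ^ 2 := by gcongr
    _ ≤ ‖Q⁻¹‖ ^ 2 * (x ⬝ᵥ ((Q * Q) *ᵥ x)) := by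
      rw [mul_pow, dotProduct_mulVec_mul_self hQ]
      gcongr
      exact norm_sq_le_dotProduct_self _

theorem dotProduct_mulVec_mulVec_of_transpose_mul_self {U : Matrix ι ι ℝ} (hU : Uᵀ * U = 1)
    (y : ι → ℝ) : (U *ᵥ y) ⬝ᵥ (U *ᵥ y) = y ⬝ᵥ y := by
  rw [dotProduct_mulVec, ← mulVec_transpose, mulVec_mulVec, hU, one_mulVec]

theorem dotProduct_mulVec_smul_conj {Q U B : Matrix ι ι ℝ} (hQ : Qᵀ = Q) (hQdet : IsUnit Q.det)
    (hU : Uᵀ * U = 1) {c : ℝ} (hB : B = c • (Q⁻¹ * U * Q)) (x : ι → ℝ) :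
    (B *ᵥ x) ⬝ᵥ ((Q * Q) *ᵥ (B *ᵥ x)) = c ^ 2 * (x ⬝ᵥ ((Q * Q) *ᵥ x)) := by
  have h : Q *ᵥ (B *ᵥ x) = c • (U *ᵥ (Q *ᵥ x)) := by
    rw [hB, mulVec_mulVec, Matrix.mul_smul, ← mul_assoc, ← mul_assoc, mul_nonsing_inv _ hQdet,
      one_mul, smul_mulVec, mulVec_mulVec]
  rw [dotProduct_mulVec_mul_self hQ, dotProduct_mulVec_mul_self hQ, h, smul_dotProduct,
    dotProduct_smul, dotProduct_mulVec_mulVec_of_transpose_mul_self hU, smul_eq_mul, smul_eq_mul,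
    sq, mul_assoc]

theorem pow_mul_dotProduct_mulVec_pow {Q U B : Matrix ι ι ℝ} (hQ : Qᵀ = Q)
    (hQdet : IsUnit Q.det) (hU : Uᵀ * U = 1) {c κ : ℝ} (hB : B = c • (Q⁻¹ * U * Q))
    (hκc : κ * c ^ 2 = 1) (x : ι → ℝ) (j : ℕ) :
    κ ^ j * (((B ^ j) *ᵥ x) ⬝ᵥ ((Q * Q) *ᵥ ((B ^ j) *ᵥ x))) = x ⬝ᵥ ((Q * Q) *ᵥ x) := by
  induction j with
  | zero => simp
  | succ j ih =>
    rw [pow_succ' B, ← mulVec_mulVec, dotProduct_mulVec_smul_conj hQ hQdet hU hB, ← ih, pow_succ]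
    linear_combination κ ^ j * (((B ^ j) *ᵥ x) ⬝ᵥ ((Q * Q) *ᵥ ((B ^ j) *ᵥ x))) * hκc

end QuadraticForm

section Sequences

theorem prod_range_mul_eq_pow_mul_prod_Icc {M : Type*} [CommMonoid M] {μ m g : ℕ → M} {κ : M}
    (h : ∀ j, μ j * g j = κ * m (j + 1) * g (j + 1)) (J : ℕ) :
    (∏ j ∈ Finset.range J, μ j) * g 0 = κ ^ J * (∏ j ∈ Finset.Icc 1 J, m j) * g J := by
  induction J with
  | zero => simp
  | succ J ih =>
    rw [Finset.prod_range_succ, Finset.prod_Icc_succ_top (by omega), pow_succ,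
      mul_right_comm, ih, mul_assoc, mul_comm (g J), h J]
    ac_rfl

theorem tendsto_prod_Icc_of_telescoping {μ m g : ℕ → ℝ} {κ a b : ℝ}
    (h : ∀ j, μ j * g j = κ * m (j + 1) * g (j + 1))
    (hμ : Tendsto (fun J => ∏ j ∈ Finset.range J, μ j) atTop (𝓝 a))
    (hg : Tendsto (fun J => κ ^ J * g J) atTop (𝓝 b)) (hb : b ≠ 0) :
    Tendsto (fun J => ∏ j ∈ Finset.Icc 1 J, m j) atTop (𝓝 (a * g 0 / b)) := by
  refine ((hμ.mul_const (g 0)).div hg hb).congr' ?_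
  filter_upwards [hg.eventually_ne hb] with J hJ
  rw [Pi.div_apply, div_eq_iff hJ, prod_range_mul_eq_pow_mul_prod_Icc h]
  ring

variable {V : Type*} {P : V → ℝ} {η : ℕ → V} {κ p : ℝ}

theorem tendsto_pow_mul_of_abs_sub_le (hκ : 1 < κ) (hη : ∀ j, κ ^ j * P (η j) = p) {f : V → ℝ}
    {C : ℝ} (hf : ∀ x, |f x - P x| ≤ C * P x ^ 2) :
    Tendsto (fun j => κ ^ j * f (η j)) atTop (𝓝 p) := by
  have hbound : ∀ j, ‖κ ^ j * f (η j) - p‖ ≤ C * p ^ 2 * κ⁻¹ ^ j := fun j => by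
    have hκj : 0 < κ ^ j := pow_pos (by linarith) j
    calc ‖κ ^ j * f (η j) - p‖ = κ ^ j * |f (η j) - P (η j)| := by
          rw [← hη j, ← mul_sub, Real.norm_eq_abs, abs_mul, abs_of_pos hκj]
      _ ≤ κ ^ j * (C * P (η j) ^ 2) := by gcongr; exact hf _
      _ = C * p ^ 2 * κ⁻¹ ^ j := by rw [← hη j, inv_pow]; field_simp
  have hgeom := tendsto_pow_atTop_nhds_zero_of_lt_one (inv_nonneg.mpr (by linarith))
    (inv_lt_one_of_one_lt₀ hκ)
  refine tendsto_iff_norm_sub_tendsto_zero.mpr (squeeze_zero (fun _ => norm_nonneg _) hbound ?_)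
  simpa using hgeom.const_mul (C * p ^ 2)

theorem tendsto_zero_of_norm_sq_le [SeminormedAddCommGroup V] (hκ : 1 < κ)
    (hη : ∀ j, κ ^ j * P (η j) = p) {K : ℝ} (hK : ∀ x, ‖x‖ ^ 2 ≤ K * P x) :
    Tendsto η atTop (𝓝 0) := by
  have hbound : ∀ j, ‖η j‖ ^ 2 ≤ K * p * κ⁻¹ ^ j := fun j => by
    have hκj : 0 < κ ^ j := pow_pos (by linarith) j
    rw [← hη j, inv_pow]
    field_simp
    exact hK (η j)
  have hgeom := tendsto_pow_atTop_nhds_zero_of_lt_one (inv_nonneg.mpr (by linarith))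
    (inv_lt_one_of_one_lt₀ hκ)
  have hsq : Tendsto (fun j => ‖η j‖ ^ 2) atTop (𝓝 0) :=
    squeeze_zero (fun _ => by positivity) hbound (by simpa using hgeom.const_mul (K * p))
  rw [tendsto_zero_iff_norm_tendsto_zero]
  simpa [Real.sqrt_sq (norm_nonneg _)] using hsq.sqrt

end Sequences

section Iterates

variable {ι : Type*} [Fintype ι] [DecidableEq ι] {M : Matrix ι ι ℝ}

theorem mulVec_inv_pow_succ_mulVec (hM : IsUnit M.det) (ξ : ι → ℝ) (j : ℕ) :
    M *ᵥ ((M⁻¹ ^ (j + 1)) *ᵥ ξ) = (M⁻¹ ^ j) *ᵥ ξ := by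
  rw [pow_succ', mulVec_mulVec, ← mul_assoc, mul_nonsing_inv _ hM, one_mul]

theorem inv_pow_mulVec_not_mem_twoPiLattice (hMint : ∀ i j, ∃ z : ℤ, M i j = z)
    (hM : IsUnit M.det) {ξ : ι → ℝ} (hξ : ξ ∉ twoPiLattice ι) (j : ℕ) :
    (M⁻¹ ^ j) *ᵥ ξ ∉ twoPiLattice ι := by
  induction j with
  | zero => simpa using hξ
  | succ j ih =>
    exact fun h => ih (mulVec_inv_pow_succ_mulVec hM ξ j ▸ mulVec_mem_twoPiLattice hMint h)

theorem inv_pow_mulVec_ne_zero (hM : IsUnit M.det) {ξ : ι → ℝ} (hξ : ξ ≠ 0) (j : ℕ) :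
    (M⁻¹ ^ j) *ᵥ ξ ≠ 0 := by
  induction j with
  | zero => simpa using hξ
  | succ j ih => exact fun h => ih (by rw [← mulVec_inv_pow_succ_mulVec hM, h, mulVec_zero])

theorem tendsto_prod_mask_inv_pow_mulVec_of_mem (hMint : ∀ i j, ∃ z : ℤ, M i j = z)
    (hM : IsUnit M.det) {G : (ι → ℝ) → ℝ} (hG : ∀ y ∈ twoPiLattice ι, G y = 0) {ξ : ι → ℝ}
    (hξ : ξ ∈ twoPiLattice ι) (hξ0 : ξ ≠ 0) (hη : Tendsto (fun j => (M⁻¹ ^ j) *ᵥ ξ) atTop (𝓝 0)) :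
    Tendsto (fun J => ∏ j ∈ Finset.Icc 1 J, mask G (cosetReps M) ((M⁻¹ ^ j) *ᵥ ξ)) atTop (𝓝 0) := by
  obtain ⟨j, hj, hj1⟩ := exists_mem_twoPiLattice_and_succ_not_mem (by simpa using hξ) hη
    (inv_pow_mulVec_ne_zero hM hξ0)
  have hmask : mask G (cosetReps M) ((M⁻¹ ^ (j + 1)) *ᵥ ξ) = 0 :=
    mask_cosetReps_eq_zero hMint hM hG (by rwa [mulVec_inv_pow_succ_mulVec hM]) hj1
  refine tendsto_const_nhds.congr' ?_
  filter_upwards [eventually_ge_atTop (j + 1)] with J hJ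
  exact (Finset.prod_eq_zero (Finset.mem_Icc.mpr ⟨by omega, hJ⟩) hmask).symm

theorem tendsto_prod_mask_inv_pow_mulVec_of_not_mem [LinearOrder ι]
    (hMint : ∀ i j, ∃ z : ℤ, M i j = z) (hM : IsUnit M.det) {R : Matrix ι ι ℝ} (hR : Rᵀ = R)
    (hRpos : ∀ x ≠ 0, 0 < x ⬝ᵥ (R *ᵥ x)) {K : ℝ} (hK : ∀ x : ι → ℝ, ‖x‖ ^ 2 ≤ K * (x ⬝ᵥ (R *ᵥ x)))
    {κ : ℝ} (hκ : 1 < κ) {ξ : ι → ℝ} (hξ : ξ ∉ twoPiLattice ι)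
    (hη : ∀ j, κ ^ j * (((M⁻¹ ^ j) *ᵥ ξ) ⬝ᵥ (R *ᵥ ((M⁻¹ ^ j) *ᵥ ξ))) = ξ ⬝ᵥ (R *ᵥ ξ))
    {μ : (ι → ℝ) → ℝ} (hμ : ∀ x ∉ twoPiLattice ι, μ x = κ * mask (trigSymbol R) (cosetReps M)
      (M⁻¹ *ᵥ x) * trigSymbol R (M⁻¹ *ᵥ x) / trigSymbol R x) {a : ℝ}
    (ha : Tendsto (fun J => ∏ j ∈ Finset.range J, μ ((M⁻¹ ^ j) *ᵥ ξ)) atTop (𝓝 a)) :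
    Tendsto (fun J => ∏ j ∈ Finset.Icc 1 J, mask (trigSymbol R) (cosetReps M) ((M⁻¹ ^ j) *ᵥ ξ))
      atTop (𝓝 (trigSymbol R ξ * a / (ξ ⬝ᵥ (R *ᵥ ξ)))) := by
  have hξ0 : ξ ≠ 0 := fun h => hξ ⟨0, funext fun i => by simp [h]⟩
  obtain ⟨C, hC⟩ := exists_abs_trigSymbol_sub_le hR hK
  have hrec : ∀ j, μ ((M⁻¹ ^ j) *ᵥ ξ) * trigSymbol R ((M⁻¹ ^ j) *ᵥ ξ) =
      κ * mask (trigSymbol R) (cosetReps M) ((M⁻¹ ^ (j + 1)) *ᵥ ξ)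
        * trigSymbol R ((M⁻¹ ^ (j + 1)) *ᵥ ξ) := fun j => by
    have hηL := inv_pow_mulVec_not_mem_twoPiLattice hMint hM hξ j
    rw [hμ _ hηL, div_mul_cancel₀ _ (trigSymbol_pos hR hRpos hηL).ne', pow_succ', mulVec_mulVec]
  convert tendsto_prod_Icc_of_telescoping
    (m := fun j => mask (trigSymbol R) (cosetReps M) ((M⁻¹ ^ j) *ᵥ ξ)) hrec ha
    (tendsto_pow_mul_of_abs_sub_le (P := fun x => x ⬝ᵥ (R *ᵥ x)) hκ hη hC) (hRpos ξ hξ0).ne'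
    using 2
  simp [mul_comm]

end Iterates

theorem rpow_two_div_mul_sq_rpow_neg_one_div {q : ℝ} (hq : 0 < q) (d : ℝ) :
    q ^ (2 / d) * (q ^ (-1 / d)) ^ 2 = 1 := by
  rw [← Real.rpow_natCast, ← Real.rpow_mul hq.le, ← Real.rpow_add hq]
  ring_nf
  exact Real.rpow_zero q

theorem elliptic_stmt15_general
    (d : ℕ)
    (A U Q : Matrix (Fin d) (Fin d) ℝ)
    (hAint : ∀ i j, ∃ z : ℤ, A i j = (z : ℝ))
    (hAeig : ∀ z : ℂ, (Matrix.charpoly (A.map Complex.ofReal)).IsRoot z →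
      1 < ‖z‖)
    (q : ℝ) (hq : q = |A.det|)
    (hU : Uᵀ * U = 1)
    (hQsym : Qᵀ = Q)
    (hQpos : ∀ x : Fin d → ℝ, x ≠ 0 → 0 < x ⬝ᵥ (Q *ᵥ x))
    (hfact : (Aᵀ)⁻¹ = (q ^ (-(1:ℝ)/(d:ℝ))) • (Q⁻¹ * U * Q))
    (P : (Fin d → ℝ) → ℝ)
    (hP : ∀ ξ, P ξ = ξ ⬝ᵥ ((Q * Q) *ᵥ ξ))
    (G : (Fin d → ℝ) → ℝ)
    (hG : ∀ ξ, G ξ = 4 * (∑ i, (Q * Q) i i * Real.sin (ξ i / 2) ^ 2)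
      + 2 * (∑ i, ∑ j, if i < j then (Q * Q) i j * Real.sin (ξ i) * Real.sin (ξ j) else 0))
    (SA : Set (Fin d → ℝ))
    (hSA : SA = {s | (∀ i, s i ∈ Set.Ico (0:ℝ) 1) ∧
      ∃ k : Fin d → ℤ, Aᵀ *ᵥ s = fun i => (k i : ℝ)})
    (m0 : (Fin d → ℝ) → ℝ)
    (hm0 : ∀ ξ, m0 ξ = (∏ᶠ s ∈ SA \ {0}, G (ξ + (2 * Real.pi) • s)) /
      (∏ᶠ s ∈ SA \ {0}, G ((2 * Real.pi) • s)))
    (μ : (Fin d → ℝ) → ℝ)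
    (hμ2 : ∀ ξ : Fin d → ℝ, ¬ (∃ k : Fin d → ℤ, ξ = fun i => 2 * Real.pi * (k i : ℝ)) →
      μ ξ = q ^ ((2:ℝ)/(d:ℝ)) * m0 ((Aᵀ)⁻¹ *ᵥ ξ) * G ((Aᵀ)⁻¹ *ᵥ ξ) / G ξ)
    (M : (Fin d → ℝ) → ℝ)
    (hM : ∀ ξ : Fin d → ℝ, Filter.Tendsto
      (fun J : ℕ => ∏ j ∈ Finset.range J, μ ((((Aᵀ)⁻¹) ^ j) *ᵥ ξ))
      Filter.atTop (nhds (M ξ)))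
    :
    ∀ ξ : Fin d → ℝ, ξ ≠ 0 →
      Filter.Tendsto (fun J : ℕ => ∏ j ∈ Finset.Icc 1 J, m0 ((((Aᵀ)⁻¹) ^ j) *ᵥ ξ))
        Filter.atTop (nhds (G ξ * M ξ / P ξ)) := by
  intro ξ hξ
  obtain rfl : P = fun x => x ⬝ᵥ ((Q * Q) *ᵥ x) := funext hP
  obtain rfl : G = trigSymbol (Q * Q) := funext hG
  subst hSA
  obtain rfl : m0 = mask (trigSymbol (Q * Q)) (cosetReps Aᵀ) := funext hm0
  obtain ⟨i, -⟩ := Function.ne_iff.mp hξ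
  have : Nonempty (Fin d) := ⟨i⟩
  have hq1 : 1 < q := hq ▸ one_lt_abs_det_of_one_lt_norm_root A hAeig
  have hAdet : IsUnit Aᵀ.det := by
    rw [det_transpose, isUnit_iff_ne_zero, ← abs_pos, ← hq]
    linarith
  have hATint : ∀ i j, ∃ z : ℤ, Aᵀ i j = z := fun i j => hAint j i
  have hQdet := isUnit_det_of_dotProduct_mulVec_pos hQpos
  have hκ : 1 < q ^ ((2:ℝ)/(d:ℝ)) := Real.one_lt_rpow hq1 (by have := Fin.pos i; positivity)
  have hPη := pow_mul_dotProduct_mulVec_pow hQsym hQdet hU hfact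
    (rpow_two_div_mul_sq_rpow_neg_one_div (by linarith) d) ξ
  obtain ⟨K, hK⟩ := exists_norm_sq_le_mul_dotProduct hQsym hQdet
  by_cases hξL : ξ ∈ twoPiLattice (Fin d)
  · rw [trigSymbol_eq_zero_of_mem hξL, zero_mul, zero_div]
    exact tendsto_prod_mask_inv_pow_mulVec_of_mem hATint hAdet (fun y => trigSymbol_eq_zero_of_mem)
      hξL hξ (tendsto_zero_of_norm_sq_le (P := fun x => x ⬝ᵥ ((Q * Q) *ᵥ x)) hκ hPη hK)
  · exact tendsto_prod_mask_inv_pow_mulVec_of_not_mem hATint hAdet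
      (by rw [transpose_mul, hQsym]) (fun x => dotProduct_mulVec_mul_self_pos hQsym hQpos) hK hκ
      hξL hPη hμ2 (hM ξ)

/-- In the elliptic setup, for every `ξ ≠ 0` the infinite product
`∏_{j=1}^∞ m₀((A⁻ᵀ)^j ξ)` converges and equals `G(ξ)M(ξ)/P(ξ)`. -/
theorem elliptic_stmt15
    (d : ℕ) (hd : 0 < d)
    (A U Q : Matrix (Fin d) (Fin d) ℝ)
    (hAint : ∀ i j, ∃ z : ℤ, A i j = (z : ℝ))
    (hAeig : ∀ z : ℂ, (Matrix.charpoly (A.map Complex.ofReal)).IsRoot z →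
      1 < ‖z‖)
    (hAdiag : ∃ Pm D : Matrix (Fin d) (Fin d) ℂ, IsUnit Pm ∧ D.IsDiag ∧
      A.map Complex.ofReal = Pm * D * Pm⁻¹)
    (hAiso : ∀ z w : ℂ, (Matrix.charpoly (A.map Complex.ofReal)).IsRoot z →
      (Matrix.charpoly (A.map Complex.ofReal)).IsRoot w → ‖z‖ = ‖w‖)
    (q : ℝ) (hq : q = |A.det|)
    (hU : Uᵀ * U = 1)
    (hQsym : Qᵀ = Q)
    (hQpos : ∀ x : Fin d → ℝ, x ≠ 0 → 0 < x ⬝ᵥ (Q *ᵥ x))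
    (hfact : (Aᵀ)⁻¹ = (q ^ (-(1:ℝ)/(d:ℝ))) • (Q⁻¹ * U * Q))
    (P : (Fin d → ℝ) → ℝ)
    (hP : ∀ ξ, P ξ = ξ ⬝ᵥ ((Q * Q) *ᵥ ξ))
    (G : (Fin d → ℝ) → ℝ)
    (hG : ∀ ξ, G ξ = 4 * (∑ i, (Q * Q) i i * Real.sin (ξ i / 2) ^ 2)
      + 2 * (∑ i, ∑ j, if i < j then (Q * Q) i j * Real.sin (ξ i) * Real.sin (ξ j) else 0))
    (SA : Set (Fin d → ℝ))
    (hSA : SA = {s | (∀ i, s i ∈ Set.Ico (0:ℝ) 1) ∧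
      ∃ k : Fin d → ℤ, Aᵀ *ᵥ s = fun i => (k i : ℝ)})
    (m0 : (Fin d → ℝ) → ℝ)
    (hm0 : ∀ ξ, m0 ξ = (∏ᶠ s ∈ SA \ {0}, G (ξ + (2 * Real.pi) • s)) /
      (∏ᶠ s ∈ SA \ {0}, G ((2 * Real.pi) • s)))
    (μ : (Fin d → ℝ) → ℝ)
    (hμ1 : ∀ ξ : Fin d → ℝ, (∃ k : Fin d → ℤ, ξ = fun i => 2 * Real.pi * (k i : ℝ)) →
      μ ξ = 1)
    (hμ2 : ∀ ξ : Fin d → ℝ, ¬ (∃ k : Fin d → ℤ, ξ = fun i => 2 * Real.pi * (k i : ℝ)) →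
      μ ξ = q ^ ((2:ℝ)/(d:ℝ)) * m0 ((Aᵀ)⁻¹ *ᵥ ξ) * G ((Aᵀ)⁻¹ *ᵥ ξ) / G ξ)
    (M : (Fin d → ℝ) → ℝ)
    (hM : ∀ ξ : Fin d → ℝ, Filter.Tendsto
      (fun J : ℕ => ∏ j ∈ Finset.range J, μ ((((Aᵀ)⁻¹) ^ j) *ᵥ ξ))
      Filter.atTop (nhds (M ξ)))
    :
    ∀ ξ : Fin d → ℝ, ξ ≠ 0 →
      Filter.Tendsto (fun J : ℕ => ∏ j ∈ Finset.Icc 1 J, m0 ((((Aᵀ)⁻¹) ^ j) *ᵥ ξ))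
        Filter.atTop (nhds (G ξ * M ξ / P ξ)) :=
  elliptic_stmt15_general d A U Q hAint hAeig q hq hU hQsym hQpos hfact P hP G hG SA hSA m0 hm0 μ
    hμ2 M hM
end

section
/- In the elliptic setup, let m ≥ 1 be an integer and define φ̂^m(ξ) := (G(ξ)M(ξ)/P(ξ))^m for ξ ≠ 0 and φ̂^m(0) := 1. Then φ̂^m(ξ) ≥ 0 for all ξ ∈ ℝ^d (so that the elliptic scaling function of order m is totally positive). -/
open Matrix

/-! Every factor of `φ̂^m` is nonnegative. The only nontrivial one is `G`: since
`4 sin²(x/2) = sin² x + 4 sin⁴(x/2)`, `G(ξ) = vᵀ Q² v + 4 ∑ q_ii sin⁴(ξ_i/2)`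
with `v = (sin ξ_i)_i`, and `Q² = QᵀQ` is positive semidefinite. Then `m₀`, `μ` and the limit
`M` of products of `μ` are nonnegative, and so is `P`. -/

theorem Finset.sum_sum_eq_sum_diag_add_two_mul_sum_lt {ι R : Type*} [LinearOrder ι] [Fintype ι]
    [Semiring R] (F : ι → ι → R) (hF : ∀ i j, F i j = F j i) :
    ∑ i, ∑ j, F i j = ∑ i, F i i + 2 * ∑ i, ∑ j, if i < j then F i j else 0 := by
  have hsplit : ∀ i j, F i j =
      (if i < j then F i j else 0) + (if j < i then F j i else 0)
        + (if i = j then F i j else 0) := by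
    intro i j
    rcases lt_trichotomy i j with h | rfl | h
    · simp [h, h.not_gt, h.ne]
    · simp
    · simp [h, h.not_gt, h.ne', hF i j]
  have hgt : ∑ i, ∑ j, (if j < i then F j i else 0) = ∑ i, ∑ j, if i < j then F i j else 0 :=
    Finset.sum_comm
  simp_rw [Finset.sum_congr rfl fun i _ => Finset.sum_congr rfl fun j _ => hsplit i j,
    Finset.sum_add_distrib, hgt, Finset.sum_ite_eq, Finset.mem_univ, if_true]
  rw [two_mul]
  abel

theorem Matrix.IsSymm.dotProduct_mulVec_eq {ι R : Type*} [LinearOrder ι] [Fintype ι]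
    [CommSemiring R] {S : Matrix ι ι R} (hS : S.IsSymm) (v : ι → R) :
    v ⬝ᵥ (S *ᵥ v) =
      ∑ i, S i i * v i * v i + 2 * ∑ i, ∑ j, if i < j then S i j * v i * v j else 0 := by
  have hF : ∀ i j, S i j * v i * v j = S j i * v j * v i := fun i j => by
    rw [hS.apply i j]; ring
  rw [← Finset.sum_sum_eq_sum_diag_add_two_mul_sum_lt _ hF]
  simp only [dotProduct, mulVec, Finset.mul_sum]
  exact Finset.sum_congr rfl fun i _ => Finset.sum_congr rfl fun j _ => by ring

theorem Real.four_mul_sin_half_sq (x : ℝ) :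
    4 * Real.sin (x / 2) ^ 2 = Real.sin x ^ 2 + 4 * Real.sin (x / 2) ^ 4 := by
  have h := Real.sin_sq_add_cos_sq (x / 2)
  have hx : Real.sin x = 2 * Real.sin (x / 2) * Real.cos (x / 2) := by
    rw [← Real.sin_two_mul]; ring_nf
  rw [hx]
  linear_combination (-4 * Real.sin (x / 2) ^ 2) * h

/-- The paper's `G`, with a general matrix `S` in place of `Q²`. -/
noncomputable def ellipticSymbol {ι : Type*} [LinearOrder ι] [Fintype ι] (S : Matrix ι ι ℝ)
    (ξ : ι → ℝ) : ℝ :=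
  4 * (∑ i, S i i * Real.sin (ξ i / 2) ^ 2)
    + 2 * (∑ i, ∑ j, if i < j then S i j * Real.sin (ξ i) * Real.sin (ξ j) else 0)

section
variable {ι : Type*} [LinearOrder ι] [Fintype ι] {S : Matrix ι ι ℝ}

theorem ellipticSymbol_eq_dotProduct_sin_add (hS : S.IsSymm) (ξ : ι → ℝ) :
    ellipticSymbol S ξ = (fun i => Real.sin (ξ i)) ⬝ᵥ (S *ᵥ fun i => Real.sin (ξ i))
      + 4 * ∑ i, S i i * Real.sin (ξ i / 2) ^ 4 := by
  have hdiag : 4 * ∑ i, S i i * Real.sin (ξ i / 2) ^ 2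
      = ∑ i, S i i * Real.sin (ξ i) * Real.sin (ξ i) + 4 * ∑ i, S i i * Real.sin (ξ i / 2) ^ 4 := by
    simp_rw [Finset.mul_sum, ← Finset.sum_add_distrib]
    exact Finset.sum_congr rfl fun i _ => by
      linear_combination (S i i) * Real.four_mul_sin_half_sq (ξ i)
  rw [ellipticSymbol, hS.dotProduct_mulVec_eq, hdiag]
  ring

theorem ellipticSymbol_nonneg (hS : S.PosSemidef) (ξ : ι → ℝ) : 0 ≤ ellipticSymbol S ξ := by
  have hsymm : S.IsSymm := by
    simpa [IsHermitian, IsSymm, conjTranspose_eq_transpose_of_trivial] using hS.isHermitian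
  rw [ellipticSymbol_eq_dotProduct_sin_add hsymm]
  have hquad := hS.dotProduct_mulVec_nonneg fun i => Real.sin (ξ i)
  rw [star_trivial] at hquad
  have hdiag : 0 ≤ ∑ i, S i i * Real.sin (ξ i / 2) ^ 4 :=
    Finset.sum_nonneg fun i _ => mul_nonneg hS.diag_nonneg (by positivity)
  linarith
end

theorem elliptic_stmt17_general
    (d : ℕ)
    (A Q : Matrix (Fin d) (Fin d) ℝ)
    (q : ℝ) (hq : q = |A.det|)
    (hQsym : Qᵀ = Q)
    (P : (Fin d → ℝ) → ℝ)
    (hP : ∀ ξ, P ξ = ξ ⬝ᵥ ((Q * Q) *ᵥ ξ))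
    (G : (Fin d → ℝ) → ℝ)
    (hG : ∀ ξ, G ξ = 4 * (∑ i, (Q * Q) i i * Real.sin (ξ i / 2) ^ 2)
      + 2 * (∑ i, ∑ j, if i < j then (Q * Q) i j * Real.sin (ξ i) * Real.sin (ξ j) else 0))
    (SA : Set (Fin d → ℝ))
    (m0 : (Fin d → ℝ) → ℝ)
    (hm0 : ∀ ξ, m0 ξ = (∏ᶠ s ∈ SA \ {0}, G (ξ + (2 * Real.pi) • s)) /
      (∏ᶠ s ∈ SA \ {0}, G ((2 * Real.pi) • s)))
    (μ : (Fin d → ℝ) → ℝ)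
    (hμ1 : ∀ ξ : Fin d → ℝ, (∃ k : Fin d → ℤ, ξ = fun i => 2 * Real.pi * (k i : ℝ)) →
      μ ξ = 1)
    (hμ2 : ∀ ξ : Fin d → ℝ, ¬ (∃ k : Fin d → ℤ, ξ = fun i => 2 * Real.pi * (k i : ℝ)) →
      μ ξ = q ^ ((2:ℝ)/(d:ℝ)) * m0 ((Aᵀ)⁻¹ *ᵥ ξ) * G ((Aᵀ)⁻¹ *ᵥ ξ) / G ξ)
    (M : (Fin d → ℝ) → ℝ)
    (hM : ∀ ξ : Fin d → ℝ, Filter.Tendsto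
      (fun J : ℕ => ∏ j ∈ Finset.range J, μ ((((Aᵀ)⁻¹) ^ j) *ᵥ ξ))
      Filter.atTop (nhds (M ξ)))
    (m : ℕ)
    (phim : (Fin d → ℝ) → ℝ)
    (hphim : ∀ ξ : Fin d → ℝ, ξ ≠ 0 → phim ξ = (G ξ * M ξ / P ξ) ^ m)
    (hphim0 : phim 0 = 1) :
    ∀ ξ : Fin d → ℝ, 0 ≤ phim ξ := by
  have hQQ : (Q * Q).PosSemidef := by
    simpa [conjTranspose_eq_transpose_of_trivial, hQsym] using posSemidef_conjTranspose_mul_self Q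
  have hGnn : ∀ ξ, 0 ≤ G ξ := fun ξ => hG ξ ▸ ellipticSymbol_nonneg hQQ ξ
  have hm0nn : ∀ ξ, 0 ≤ m0 ξ := fun ξ => hm0 ξ ▸
    div_nonneg (finprod_nonneg fun _ => finprod_nonneg fun _ => hGnn _)
      (finprod_nonneg fun _ => finprod_nonneg fun _ => hGnn _)
  have hμnn : ∀ ξ, 0 ≤ μ ξ := by
    intro ξ
    by_cases hξ : ∃ k : Fin d → ℤ, ξ = fun i => 2 * Real.pi * (k i : ℝ)
    · rw [hμ1 ξ hξ]; exact zero_le_one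
    · rw [hμ2 ξ hξ]
      have hq0 : 0 ≤ q := hq ▸ abs_nonneg _
      exact div_nonneg
        (mul_nonneg (mul_nonneg (Real.rpow_nonneg hq0 _) (hm0nn _)) (hGnn _)) (hGnn _)
  have hMnn : ∀ ξ, 0 ≤ M ξ := fun ξ =>
    ge_of_tendsto' (hM ξ) fun _ => Finset.prod_nonneg fun _ _ => hμnn _
  intro ξ
  rcases eq_or_ne ξ 0 with rfl | hξ
  · exact hphim0 ▸ zero_le_one
  · rw [hphim ξ hξ]
    have hPnn : 0 ≤ P ξ := by simpa [hP] using hQQ.dotProduct_mulVec_nonneg ξ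
    exact pow_nonneg (div_nonneg (mul_nonneg (hGnn ξ) (hMnn ξ)) hPnn) m

/-- In the elliptic setup, `φ̂^m(ξ) ≥ 0` for all `ξ`, so the elliptic
scaling function of order `m` is totally positive. -/
theorem elliptic_stmt17
    (d : ℕ) (hd : 0 < d)
    (A U Q : Matrix (Fin d) (Fin d) ℝ)
    (hAint : ∀ i j, ∃ z : ℤ, A i j = (z : ℝ))
    (hAeig : ∀ z : ℂ, (Matrix.charpoly (A.map Complex.ofReal)).IsRoot z →
      1 < ‖z‖)
    (hAdiag : ∃ Pm D : Matrix (Fin d) (Fin d) ℂ, IsUnit Pm ∧ D.IsDiag ∧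
      A.map Complex.ofReal = Pm * D * Pm⁻¹)
    (hAiso : ∀ z w : ℂ, (Matrix.charpoly (A.map Complex.ofReal)).IsRoot z →
      (Matrix.charpoly (A.map Complex.ofReal)).IsRoot w → ‖z‖ = ‖w‖)
    (q : ℝ) (hq : q = |A.det|)
    (hU : Uᵀ * U = 1)
    (hQsym : Qᵀ = Q)
    (hQpos : ∀ x : Fin d → ℝ, x ≠ 0 → 0 < x ⬝ᵥ (Q *ᵥ x))
    (hfact : (Aᵀ)⁻¹ = (q ^ (-(1:ℝ)/(d:ℝ))) • (Q⁻¹ * U * Q))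
    (P : (Fin d → ℝ) → ℝ)
    (hP : ∀ ξ, P ξ = ξ ⬝ᵥ ((Q * Q) *ᵥ ξ))
    (G : (Fin d → ℝ) → ℝ)
    (hG : ∀ ξ, G ξ = 4 * (∑ i, (Q * Q) i i * Real.sin (ξ i / 2) ^ 2)
      + 2 * (∑ i, ∑ j, if i < j then (Q * Q) i j * Real.sin (ξ i) * Real.sin (ξ j) else 0))
    (SA : Set (Fin d → ℝ))
    (hSA : SA = {s | (∀ i, s i ∈ Set.Ico (0:ℝ) 1) ∧
      ∃ k : Fin d → ℤ, Aᵀ *ᵥ s = fun i => (k i : ℝ)})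
    (m0 : (Fin d → ℝ) → ℝ)
    (hm0 : ∀ ξ, m0 ξ = (∏ᶠ s ∈ SA \ {0}, G (ξ + (2 * Real.pi) • s)) /
      (∏ᶠ s ∈ SA \ {0}, G ((2 * Real.pi) • s)))
    (μ : (Fin d → ℝ) → ℝ)
    (hμ1 : ∀ ξ : Fin d → ℝ, (∃ k : Fin d → ℤ, ξ = fun i => 2 * Real.pi * (k i : ℝ)) →
      μ ξ = 1)
    (hμ2 : ∀ ξ : Fin d → ℝ, ¬ (∃ k : Fin d → ℤ, ξ = fun i => 2 * Real.pi * (k i : ℝ)) →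
      μ ξ = q ^ ((2:ℝ)/(d:ℝ)) * m0 ((Aᵀ)⁻¹ *ᵥ ξ) * G ((Aᵀ)⁻¹ *ᵥ ξ) / G ξ)
    (M : (Fin d → ℝ) → ℝ)
    (hM : ∀ ξ : Fin d → ℝ, Filter.Tendsto
      (fun J : ℕ => ∏ j ∈ Finset.range J, μ ((((Aᵀ)⁻¹) ^ j) *ᵥ ξ))
      Filter.atTop (nhds (M ξ)))
    (m : ℕ) (hm : 1 ≤ m)
    (phim : (Fin d → ℝ) → ℝ)
    (hphim : ∀ ξ : Fin d → ℝ, ξ ≠ 0 → phim ξ = (G ξ * M ξ / P ξ) ^ m)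
    (hphim0 : phim 0 = 1) :
    ∀ ξ : Fin d → ℝ, 0 ≤ phim ξ :=
  elliptic_stmt17_general d A Q q hq hQsym P hP G hG SA m0 hm0 μ hμ1 hμ2 M hM m phim hphim hphim0
end
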